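/- Let H_A, H_B be finite-dimensional complex Hilbert spaces, let {|x⟩}_x be an orthonormal basis of H_A, and let ρ_AB be a positive semidefinite operator on H_A ⊗ H_B that is classical relative to {|x⟩}_x, i.e., ρ_AB = Σ_x |x⟩⟨x| ⊗ ρ_B^x for positive semidefinite operators ρ_B^x on H_B. Then the maximum of tr(ρ_AB · E_AB) over positive semidefinite E_AB with tr_A(E_AB) = id_B is attained by (and equals the maximum over) operators E_AB that are themselves classical relative to {|x⟩}_x, i.e., of the form E_AB = Σ_x |x⟩⟨x| ⊗ E_B^x. -/

import Mathlib

open Matrix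
open scoped Kronecker ComplexConjugate ComplexOrder

noncomputable section

/-- Partial trace over the first (A) subsystem. -/
def ptraceA {A B : Type*} [Fintype A] (M : Matrix (A × B) (A × B) ℂ) :
    Matrix B B ℂ :=
  Matrix.of fun i j => ∑ a : A, M (a, i) (a, j)

/-- Partial trace over the second (B) subsystem. -/
def ptraceB {A B : Type*} [Fintype B] (M : Matrix (A × B) (A × B) ℂ) :
    Matrix A A ℂ :=
  Matrix.of fun i j => ∑ b : B, M (i, b) (j, b)

/-- A density operator: positive semidefinite with unit trace. -/
def IsDensity {n : Type*} [Fintype n] (ρ : Matrix n n ℂ) : Prop :=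
  ρ.PosSemidef ∧ ρ.trace = 1

/-- Conditional min-entropy `H_min(A|B)_ρ = - inf_σ D_∞(ρ ‖ id_A ⊗ σ)`, where the
infimum ranges over density operators `σ` on `B` and
`D_∞(τ‖τ') = inf {λ | τ ≤ 2^λ τ'}`. -/
def Hmin {A B : Type*} [Fintype A] [Fintype B] [DecidableEq A] [DecidableEq B]
    (ρ : Matrix (A × B) (A × B) ℂ) : ℝ :=
  - sInf {l : ℝ | ∃ σ : Matrix B B ℂ, IsDensity σ ∧
      (((2 : ℝ) ^ l : ℝ) • ((1 : Matrix A A ℂ) ⊗ₖ σ) - ρ).PosSemidef}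

open scoped Classical in
/-- Positive semidefinite square root (junk value `0` off the PSD cone). -/
def psqrt {n : Type*} [Fintype n] [DecidableEq n] (M : Matrix n n ℂ) : Matrix n n ℂ :=
  if h : M.PosSemidef then
    (h.1.eigenvectorUnitary : Matrix n n ℂ) * diagonal ((↑) ∘ Real.sqrt ∘ h.1.eigenvalues) *
      (star (h.1.eigenvectorUnitary : Matrix n n ℂ)) else 0

/-- Trace norm `‖M‖₁ = tr √(Mᴴ M)`. -/
def traceNorm {n : Type*} [Fintype n] [DecidableEq n] (M : Matrix n n ℂ) : ℝ :=
  (psqrt (Mᴴ * M)).trace.re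

/-- Fidelity `F(ρ,σ) = ‖√ρ √σ‖₁`. -/
def fidelity {n : Type*} [Fintype n] [DecidableEq n] (ρ σ : Matrix n n ℂ) : ℝ :=
  traceNorm (psqrt ρ * psqrt σ)

/-- Choi matrix of a linear map on matrices. -/
def choi {B A' : Type*} [Fintype B] [DecidableEq B] [Fintype A']
    (F : Matrix B B ℂ →ₗ[ℂ] Matrix A' A' ℂ) : Matrix (B × A') (B × A') ℂ :=
  Matrix.of fun p q => (F (Matrix.single p.1 q.1 1)) p.2 q.2

/-- A quantum operation (CPTP map): completely positive (PSD Choi matrix, by Choi's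
theorem) and trace-preserving. -/
def IsCPTP {B A' : Type*} [Fintype B] [DecidableEq B] [Fintype A']
    (F : Matrix B B ℂ →ₗ[ℂ] Matrix A' A' ℂ) : Prop :=
  (choi F).PosSemidef ∧ ∀ M : Matrix B B ℂ, (F M).trace = M.trace

/-- The map `id_A ⊗ F` applied to a bipartite operator. -/
def idTensor {A B A' : Type*} [Fintype B]
    (F : Matrix B B ℂ →ₗ[ℂ] Matrix A' A' ℂ) (ρ : Matrix (A × B) (A × B) ℂ) :
    Matrix (A × A') (A × A') ℂ :=
  Matrix.of fun p q => (F (Matrix.of fun b b' => ρ (p.1, b) (q.1, b'))) p.2 q.2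

/-- The quadratic form `⟨ψ|M|ψ⟩` (real part). -/
def pureOverlap {n : Type*} [Fintype n] (ψ : n → ℂ) (M : Matrix n n ℂ) : ℝ :=
  (∑ p, ∑ q, conj (ψ p) * M p q * ψ q).re

/-- The maximally entangled state `|Φ⟩ = d^{-1/2} ∑ₓ |x⟩|x⟩`. -/
def maxEnt (A : Type*) [Fintype A] [DecidableEq A] : A × A → ℂ :=
  fun p => if p.1 = p.2 then ((Real.sqrt (Fintype.card A))⁻¹ : ℝ) else 0

/-- `q_corr(A|B)_ρ`: `d_A` times the maximal squared fidelity with the maximally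
entangled state achievable by quantum operations on `B`. -/
def qcorr {A B : Type*} [Fintype A] [Fintype B] [DecidableEq A] [DecidableEq B]
    (ρ : Matrix (A × B) (A × B) ℂ) : ℝ :=
  (Fintype.card A : ℝ) *
    sSup {x : ℝ | ∃ F : Matrix B B ℂ →ₗ[ℂ] Matrix A A ℂ, IsCPTP F ∧
      x = pureOverlap (maxEnt A) (idTensor F ρ)}

/-- The completely mixed state. -/
def mixed (A : Type*) [Fintype A] [DecidableEq A] : Matrix A A ℂ :=
  ((Fintype.card A : ℂ)⁻¹) • (1 : Matrix A A ℂ)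

/-- `q_decpl(A|B)_ρ`: `d_A` times the maximal squared fidelity with `τ_A ⊗ σ_B`. -/
def qdecpl {A B : Type*} [Fintype A] [Fintype B] [DecidableEq A] [DecidableEq B]
    (ρ : Matrix (A × B) (A × B) ℂ) : ℝ :=
  (Fintype.card A : ℝ) *
    sSup {x : ℝ | ∃ σ : Matrix B B ℂ, IsDensity σ ∧
      x = (fidelity ρ ((mixed A) ⊗ₖ σ)) ^ 2}

/-- Reduced state `tr_C |ψ⟩⟨ψ|` of a pure state `ψ` on `(A ⊗ B) ⊗ C`. -/
def redL {S C : Type*} [Fintype C] (ψ : S × C → ℂ) : Matrix S S ℂ :=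
  Matrix.of fun s s' => ∑ c, ψ (s, c) * conj (ψ (s', c))

/-- Reduced state `tr_B |ψ⟩⟨ψ|` on `A ⊗ C` of a pure state `ψ` on `(A ⊗ B) ⊗ C`. -/
def redAC {A B C : Type*} [Fintype B] (ψ : (A × B) × C → ℂ) :
    Matrix (A × C) (A × C) ℂ :=
  Matrix.of fun p q => ∑ b, ψ ((p.1, b), p.2) * conj (ψ ((q.1, b), q.2))

/-! The value `tr(ρ E)` of a classical `ρ = ∑ₓ |x⟩⟨x| ⊗ ρₓ` only sees the diagonal blocks
`Eₓ = (⟨x| ⊗ id) E (|x⟩ ⊗ id)` of `E`, and these blocks form a POVM on `B` whenever `E` is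
positive with `tr_X E = id`; conversely every POVM is the family of blocks of the block-diagonal
operator `∑ₓ |x⟩⟨x| ⊗ Eₓ`. So both optimisations range over the same set of values
`{∑ₓ tr(ρₓ Eₓ) | (Eₓ) a POVM}`, which is compact and nonempty and hence has a greatest element. -/

def povmSet (X B : Type*) [Fintype X] [DecidableEq B] : Set (X → Matrix B B ℂ) :=
  {E | (∀ y, (E y).PosSemidef) ∧ ∑ y, E y = 1}

section Classical

variable {X B : Type*}

def classicalOp [Fintype X] [DecidableEq X] (M : X → Matrix B B ℂ) :
    Matrix (X × B) (X × B) ℂ :=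
  ∑ y : X, Matrix.single y y (1 : ℂ) ⊗ₖ M y

def diagBlock (E : Matrix (X × B) (X × B) ℂ) (x : X) : Matrix B B ℂ :=
  E.submatrix (Prod.mk x) (Prod.mk x)

lemma classicalOp_apply [Fintype X] [DecidableEq X] (M : X → Matrix B B ℂ) (x x' : X)
    (b b' : B) :
    classicalOp M (x, b) (x', b') = if x = x' then M x b b' else 0 := by
  simp only [classicalOp, Matrix.sum_apply, kroneckerMap_apply, Matrix.single_apply]
  split_ifs with h
  · simp [h]
  · simp only [ite_mul, one_mul, zero_mul]
    exact Finset.sum_eq_zero fun y _ => if_neg fun hy => h (hy.1.symm.trans hy.2)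

lemma diagBlock_classicalOp [Fintype X] [DecidableEq X] (M : X → Matrix B B ℂ) :
    diagBlock (classicalOp M) = M := by
  ext x b b'
  simp [diagBlock, classicalOp_apply]

lemma sum_diagBlock [Fintype X] (E : Matrix (X × B) (X × B) ℂ) :
    ∑ x, diagBlock E x = ptraceA E := by
  ext b b'
  simp [diagBlock, ptraceA, Matrix.sum_apply]

lemma Matrix.PosSemidef.classicalOp [Fintype X] [DecidableEq X] [Fintype B]
    {M : X → Matrix B B ℂ} (hM : ∀ y, (M y).PosSemidef) : (classicalOp M).PosSemidef :=
  posSemidef_sum _ fun y _ => by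
    rw [← diagonal_single]
    exact (PosSemidef.diagonal (Pi.single_nonneg.mpr zero_le_one)).kronecker (hM y)

lemma trace_classicalOp_mul [Fintype X] [DecidableEq X] [Fintype B] (ρ : X → Matrix B B ℂ)
    (E : Matrix (X × B) (X × B) ℂ) :
    (classicalOp ρ * E).trace = ∑ x, (ρ x * diagBlock E x).trace := by
  simp only [trace, diag, mul_apply, Fintype.sum_prod_type, classicalOp_apply, ite_mul,
    zero_mul, diagBlock, submatrix_apply]
  simp [Finset.sum_ite_eq]

lemma Matrix.PosSemidef.norm_apply_sq_le {M : Matrix B B ℂ} (hM : M.PosSemidef) (i j : B) :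
    ‖M i j‖ ^ 2 ≤ (M i i).re * (M j j).re := by
  have hdet := (hM.submatrix ![i, j]).det_nonneg
  rw [det_fin_two] at hdet
  simp only [submatrix_apply, Matrix.cons_val_zero, Matrix.cons_val_one] at hdet
  have hji : M j i = conj (M i j) := by simpa using (hM.1.apply j i).symm
  have hi := (Complex.le_def.mp (hM.diag_nonneg (i := i))).2
  have hj := (Complex.le_def.mp (hM.diag_nonneg (i := j))).2
  rw [hji, Complex.mul_conj] at hdet
  have := (Complex.le_def.mp hdet).1
  simp only [Complex.sub_re, Complex.mul_re, Complex.ofReal_re, Complex.zero_re, ← hi, ← hj,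
    Complex.zero_im, mul_zero, sub_zero, Complex.normSq_eq_norm_sq] at this
  linarith

lemma isClosed_setOf_posSemidef [Fintype B] : IsClosed {M : Matrix B B ℂ | M.PosSemidef} := by
  simp_rw [posSemidef_iff_dotProduct_mulVec, Set.ofPred_and, Set.ofPred_forall]
  exact (isClosed_eq continuous_id.matrix_conjTranspose continuous_id).inter
    (isClosed_iInter fun v => isClosed_le continuous_const (by fun_prop))

lemma norm_apply_le_one_of_mem_povmSet [Fintype X] [Fintype B] [DecidableEq B]
    {E : X → Matrix B B ℂ} (hE : E ∈ povmSet X B) (y : X) (b b' : B) : ‖E y b b'‖ ≤ 1 := by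
  have hdiag : ∀ c, (E y c c).re ≤ 1 := fun c => by
    have hle : E y c c ≤ ∑ y', E y' c c :=
      Finset.single_le_sum (fun y' _ => (hE.1 y').diag_nonneg) (Finset.mem_univ y)
    have hsum : ∑ y', E y' c c = 1 := by
      simpa [Matrix.sum_apply] using congrFun (congrFun hE.2 c) c
    simpa [hsum] using (Complex.le_def.mp hle).1
  have hsq := (hE.1 y).norm_apply_sq_le b b'
  have h0 : ∀ c, 0 ≤ (E y c c).re := fun c => (Complex.le_def.mp (hE.1 y).diag_nonneg).1
  nlinarith [hdiag b, hdiag b', h0 b, h0 b', norm_nonneg (E y b b')]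

lemma isCompact_povmSet [Fintype X] [Fintype B] [DecidableEq B] : IsCompact (povmSet X B) := by
  have hclosed : IsClosed (povmSet X B) := by
    rw [povmSet, Set.ofPred_and, Set.ofPred_forall]
    exact (isClosed_iInter fun y =>
      (isClosed_setOf_posSemidef (B := B)).preimage (continuous_apply y)).inter
      (isClosed_eq (continuous_finsetSum _ fun y _ => continuous_apply y) continuous_const)
  refine (isCompact_univ_pi fun _ => isCompact_univ_pi fun _ => isCompact_univ_pi fun _ =>
    isCompact_closedBall (0 : ℂ) 1).of_isClosed_subset hclosed ?_
  intro E hE y _ b _ b' _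
  simpa using norm_apply_le_one_of_mem_povmSet hE y b b'

lemma povmSet_nonempty [Fintype X] [Nonempty X] [DecidableEq X] [DecidableEq B] :
    (povmSet X B).Nonempty := by
  obtain ⟨x₀⟩ := ‹Nonempty X›
  refine ⟨Pi.single x₀ 1, fun y => ?_, Fintype.sum_pi_single' x₀ 1⟩
  rcases eq_or_ne y x₀ with rfl | hy
  · simpa using PosSemidef.one
  · simpa [hy] using PosSemidef.zero

lemma setOf_trace_mul_eq_image [Fintype X] [DecidableEq X] [Fintype B] [DecidableEq B]
    (ρ : X → Matrix B B ℂ) :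
    {r : ℝ | ∃ E : Matrix (X × B) (X × B) ℂ, E.PosSemidef ∧ ptraceA E = 1 ∧
        r = (classicalOp ρ * E).trace.re} =
      (fun E => (∑ x, (ρ x * E x).trace).re) '' povmSet X B := by
  ext r
  constructor
  · rintro ⟨E, hE, hE1, rfl⟩
    exact ⟨diagBlock E, ⟨fun x => hE.submatrix _, (sum_diagBlock E).trans hE1⟩,
      by rw [trace_classicalOp_mul]⟩
  · rintro ⟨E, ⟨hE, hE1⟩, rfl⟩
    refine ⟨classicalOp E, .classicalOp hE, ?_, ?_⟩
    · rw [← sum_diagBlock, diagBlock_classicalOp, hE1]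
    · rw [trace_classicalOp_mul, diagBlock_classicalOp]

lemma setOf_trace_mul_classicalOp_eq_image [Fintype X] [DecidableEq X] [Fintype B]
    [DecidableEq B] (ρ : X → Matrix B B ℂ) :
    {r : ℝ | ∃ E : X → Matrix B B ℂ, (∀ y, (E y).PosSemidef) ∧ ∑ y, E y = 1 ∧
        r = (classicalOp ρ * classicalOp E).trace.re} =
      (fun E => (∑ x, (ρ x * E x).trace).re) '' povmSet X B := by
  ext r
  simp only [Set.mem_ofPred_eq, Set.mem_image, povmSet, trace_classicalOp_mul,
    diagBlock_classicalOp, and_assoc, eq_comm]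

end Classical

theorem stmt2_general {X B : Type*} [Fintype X] [Fintype B] [DecidableEq X] [DecidableEq B]
    [Nonempty X]
    (ρB : X → Matrix B B ℂ) :
    ∃ v : ℝ,
      IsGreatest {x : ℝ | ∃ E : Matrix (X × B) (X × B) ℂ, E.PosSemidef ∧
          ptraceA E = 1 ∧
          x = ((∑ y : X, Matrix.single y y (1 : ℂ) ⊗ₖ ρB y) * E).trace.re} v ∧
      IsGreatest {x : ℝ | ∃ EB : X → Matrix B B ℂ, (∀ y, (EB y).PosSemidef) ∧
          (∑ y : X, EB y) = 1 ∧
          x = ((∑ y : X, Matrix.single y y (1 : ℂ) ⊗ₖ ρB y) *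
                (∑ y : X, Matrix.single y y (1 : ℂ) ⊗ₖ EB y)).trace.re} v := by
  obtain ⟨v, hv⟩ := (isCompact_povmSet.image (by fun_prop)).exists_isGreatest
    (povmSet_nonempty.image (fun E : X → Matrix B B ℂ => (∑ x, (ρB x * E x).trace).re))
  exact ⟨v, setOf_trace_mul_eq_image ρB ▸ hv, setOf_trace_mul_classicalOp_eq_image ρB ▸ hv⟩

/-- for a classical `ρ_XB = ∑ₓ |x⟩⟨x| ⊗ ρ_B^x`, the maximum of
`tr(ρ E)` over PSD `E` with `tr_X E = id_B` is attained by (and equals the maximum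
over) classical operators `E = ∑ₓ |x⟩⟨x| ⊗ E_B^x`. -/
theorem stmt2 {X B : Type*} [Fintype X] [Fintype B] [DecidableEq X] [DecidableEq B]
    [Nonempty X] [Nonempty B]
    (ρB : X → Matrix B B ℂ) (hρB : ∀ x, (ρB x).PosSemidef) :
    ∃ v : ℝ,
      IsGreatest {x : ℝ | ∃ E : Matrix (X × B) (X × B) ℂ, E.PosSemidef ∧
          ptraceA E = 1 ∧
          x = ((∑ y : X, Matrix.single y y (1 : ℂ) ⊗ₖ ρB y) * E).trace.re} v ∧
      IsGreatest {x : ℝ | ∃ EB : X → Matrix B B ℂ, (∀ y, (EB y).PosSemidef) ∧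
          (∑ y : X, EB y) = 1 ∧
          x = ((∑ y : X, Matrix.single y y (1 : ℂ) ⊗ₖ ρB y) *
                (∑ y : X, Matrix.single y y (1 : ℂ) ⊗ₖ EB y)).trace.re} v :=
  stmt2_general ρB

end
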